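/- Let 𝒴 be a finite linearly ordered set and let Q, Q' : 𝒴 → (0,1] be strictly positive probability mass functions on 𝒴. Let γ ∈ (0,1) and η ∈ (−1,∞), let (w_k)_{k≥1} be the truncated negative binomial distribution D_{η,γ} with mean m and probability generating function φ, and define A(y) = φ(Q(≤y)) − φ(Q(<y)) and A'(y) = φ(Q'(≤y)) − φ(Q'(<y)). Let ε₀ ≥ 0 and δ₀ ≥ 0 and suppose ∑_y max(Q(y) − e^{ε₀} Q'(y), 0) ≤ δ₀ and ∑_y max(Q'(y) − e^{ε₀} Q(y), 0) ≤ δ₀. Then with ε = (η+2)·ε₀ + (η+1)·δ₀/γ one has ∑_{y∈𝒴} max(A(y) − e^{ε}·A'(y), 0) ≤ m·δ₀. -/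

import Mathlib

open Finset Real

/-- Cumulative mass `Q(≤ y)` of a pmf on a finite linearly ordered set. -/
noncomputable def cumLE {Y : Type*} [Fintype Y] [LinearOrder Y] (Q : Y → ℝ) (y : Y) : ℝ :=
  ∑ z ∈ Finset.univ.filter (fun z => z ≤ y), Q z

/-- Cumulative mass `Q(< y)` of a pmf on a finite linearly ordered set. -/
noncomputable def cumLT {Y : Type*} [Fintype Y] [LinearOrder Y] (Q : Y → ℝ) (y : Y) : ℝ :=
  ∑ z ∈ Finset.univ.filter (fun z => z < y), Q z

/-- The pmf of the truncated negative binomial distribution `D_{η,γ}` (supported on `k ≥ 1`). -/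
noncomputable def negBinPMF (η γ : ℝ) (k : ℕ) : ℝ :=
  if k = 0 then 0
  else if η = 0 then (1 - γ) ^ k / (k * Real.log (1 / γ))
  else (1 - γ) ^ k / (γ ^ (-η) - 1) * ∏ i ∈ Finset.range k, ((i + η) / (i + 1))

/-- The mean of the truncated negative binomial distribution `D_{η,γ}`. -/
noncomputable def negBinMean (η γ : ℝ) : ℝ :=
  if η = 0 then (1 / γ - 1) / Real.log (1 / γ)
  else η * (1 - γ) / (γ * (1 - γ ^ η))

/-- The probability generating function of a distribution `w` on ℕ. -/
noncomputable def pgf (w : ℕ → ℝ) (z : ℝ) : ℝ := ∑' k : ℕ, w k * z ^ k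

/-!
The pgf `φ` of `D_{η,γ}` is, by the binomial series, `((1 - (1-γ)x)^(-η) - 1) / (γ^(-η) - 1)`
(a logarithm when `η = 0`), so `φ'(x) = K (1 - (1-γ)x)^(-(η+1))` and `φ'(1) = m`.
Fix `y`, put `x_t = Q(<y) + t Q(y)` for `t ∈ [0,1]`, so that `A(y) = φ(x_1) - φ(x_0)` and
`d/dt φ(x_t) = Q(y) φ'(x_t)`. The `(ε₀, δ₀)` bound of `Q'` against `Q`, applied to the fractional
event of mass `1 - x_t` (everything above `y` plus the fraction `1 - t` of `y`), gives
`1 - x'_t ≤ e^ε₀ (1 - x_t) + δ₀`. As `1 - (1-γ)x = γ + (1-γ)(1-x) ≥ γ`, the additive `δ₀` is at most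
the factor `1 + δ₀/γ`, whence `φ'(x_t) ≤ e^((η+1)(ε₀ + δ₀/γ)) φ'(x'_t)`. Together with
`Q(y) ≤ e^ε₀ Q'(y) + max(Q(y) - e^ε₀ Q'(y), 0)` and `φ'(x_t) ≤ φ'(1) = m`, comparing derivatives
in `t` gives `A(y) ≤ e^ε A'(y) + m max(Q(y) - e^ε₀ Q'(y), 0)`; summing over `y` gives `m δ₀`.
-/
theorem prod_range_add_div_add_one_eq_multichoose (η : ℝ) (n : ℕ) :
    ∏ i ∈ range n, ((i + η) / (i + 1)) = Ring.multichoose η n := by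
  have hpoch : ∏ i ∈ range n, (i + η) = (ascPochhammer ℝ n).eval η := by
    induction n with
    | zero => simp
    | succ n ih => rw [prod_range_succ, ih, ascPochhammer_succ_eval, add_comm η]
  have key := Ring.factorial_nsmul_multichoose_eq_ascPochhammer η n
  rw [Polynomial.ascPochhammer_smeval_eq_eval, ← hpoch, nsmul_eq_mul] at key
  have hfac : ∏ i ∈ range n, ((i : ℝ) + 1) = n.factorial := by
    exact_mod_cast prod_range_add_one_eq_factorial n
  rw [prod_div_distrib, ← key, hfac, mul_div_cancel_left₀ _ (by positivity)]

theorem hasSum_multichoose_mul_pow {t : ℝ} (ht : |t| < 1) (η : ℝ) :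
    HasSum (fun n ↦ Ring.multichoose η n * t ^ n) ((1 - t) ^ (-η)) := by
  have h := (Real.one_div_one_sub_rpow_hasFPowerSeriesOnBall_zero η).hasSum
    (y := t) (by simpa [enorm_eq_nnnorm, ← NNReal.coe_lt_one] using ht)
  simp only [FormalMultilinearSeries.ofScalars_apply_eq, zero_add, smul_eq_mul,
    ← Ring.multichoose_eq] at h
  rwa [rpow_neg (by linarith [le_abs_self t]), inv_eq_one_div]

noncomputable def negBinPGF (η γ x : ℝ) : ℝ :=
  if η = 0 then log (1 - (1 - γ) * x) / log γ
  else ((1 - (1 - γ) * x) ^ (-η) - 1) / (γ ^ (-η) - 1)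

theorem hasSum_negBinPMF_mul_pow (η γ : ℝ) {x : ℝ} (hx : |(1 - γ) * x| < 1) :
    HasSum (fun k ↦ negBinPMF η γ k * x ^ k) (negBinPGF η γ x) := by
  rw [← hasSum_nat_add_iff' 1]
  simp only [range_one, sum_singleton, negBinPMF, if_pos, zero_mul, sub_zero, negBinPGF]
  by_cases hη : η = 0
  · have hterm (n : ℕ) : (1 - γ) ^ (n + 1) / ((n + 1 : ℕ) * log (1 / γ)) * x ^ (n + 1)
        = ((1 - γ) * x) ^ (n + 1) / (n + 1) / -log γ := by
      rw [one_div, log_inv, mul_pow, ← div_div]; push_cast; ring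
    simpa only [hη, if_true, Nat.add_one_ne_zero, if_false, hterm, neg_div_neg_eq]
      using (Real.hasSum_pow_div_log_of_abs_lt_one hx).div_const (-log γ)
  · have hterm (n : ℕ) :
        (1 - γ) ^ (n + 1) / (γ ^ (-η) - 1) * Ring.multichoose η (n + 1) * x ^ (n + 1)
        = Ring.multichoose η (n + 1) * ((1 - γ) * x) ^ (n + 1) / (γ ^ (-η) - 1) := by
      rw [mul_pow]; ring
    have h := (hasSum_nat_add_iff' 1).2 (hasSum_multichoose_mul_pow hx η)
    simp only [range_one, sum_singleton, Ring.multichoose_zero_right, pow_zero, mul_one] at h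
    simpa only [hη, if_false, Nat.add_one_ne_zero, prod_range_add_div_add_one_eq_multichoose,
      hterm] using h.div_const (γ ^ (-η) - 1)

theorem pgf_negBinPMF {η γ x : ℝ} (hx : |(1 - γ) * x| < 1) :
    pgf (negBinPMF η γ) x = negBinPGF η γ x :=
  (hasSum_negBinPMF_mul_pow η γ hx).tsum_eq

noncomputable def negBinPGFDerivCoeff (η γ : ℝ) : ℝ :=
  if η = 0 then (1 - γ) / log (1 / γ) else η * (1 - γ) / (γ ^ (-η) - 1)

noncomputable def negBinPGFDeriv (η γ x : ℝ) : ℝ :=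
  negBinPGFDerivCoeff η γ * (1 - (1 - γ) * x) ^ (-(η + 1))

theorem hasDerivAt_negBinPGF (η γ : ℝ) {x : ℝ} (hx : (1 - γ) * x < 1) :
    HasDerivAt (negBinPGF η γ) (negBinPGFDeriv η γ x) x := by
  have hu : HasDerivAt (fun x ↦ 1 - (1 - γ) * x) (-(1 - γ)) x := by
    simpa using ((hasDerivAt_id x).const_mul (1 - γ)).const_sub 1
  have hu0 : 1 - (1 - γ) * x ≠ 0 := by linarith
  unfold negBinPGF negBinPGFDeriv negBinPGFDerivCoeff
  by_cases hη : η = 0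
  · simp only [hη, if_true]
    refine (((hasDerivAt_log hu0).comp x hu).div_const (log γ)).congr_deriv ?_
    rw [zero_add, rpow_neg_one, one_div, log_inv, div_neg]
    ring
  · simp only [hη, if_false]
    refine ((((hasDerivAt_rpow_const (Or.inl hu0)).comp x hu).sub_const 1).div_const
      (γ ^ (-η) - 1)).congr_deriv ?_
    rw [neg_add', sub_eq_add_neg (-η)]
    ring

theorem negBinPGFDerivCoeff_nonneg {η γ : ℝ} (hγ0 : 0 < γ) (hγ1 : γ ≤ 1) :
    0 ≤ negBinPGFDerivCoeff η γ := by
  unfold negBinPGFDerivCoeff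
  split_ifs with hη
  · exact div_nonneg (by linarith) (log_nonneg (one_le_one_div hγ0 hγ1))
  · rw [mul_comm, mul_div_assoc]
    refine mul_nonneg (by linarith) ?_
    rcases lt_or_gt_of_ne hη with hneg | hpos
    · exact div_nonneg_of_nonpos hneg.le
        (by linarith [rpow_le_one hγ0.le hγ1 (neg_nonneg.2 hneg.le)])
    · exact div_nonneg hpos.le
        (by linarith [one_le_rpow_of_pos_of_le_one_of_nonpos hγ0 hγ1 (neg_nonpos.2 hpos.le)])

theorem negBinMean_eq_negBinPGFDeriv_one {η γ : ℝ} (hγ : 0 < γ) :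
    negBinMean η γ = negBinPGFDeriv η γ 1 := by
  unfold negBinMean negBinPGFDeriv negBinPGFDerivCoeff
  rw [show 1 - (1 - γ) * 1 = γ by ring]
  split_ifs with hη
  · rw [hη, zero_add, rpow_neg_one]
    field_simp
  · have hp : 0 < γ ^ η := rpow_pos_of_pos hγ η
    rw [neg_add, rpow_add hγ, rpow_neg hγ.le, rpow_neg_one]
    field_simp

theorem one_sub_mul_le_exp_mul_one_sub_mul {γ a δ x x' : ℝ} (hγ0 : 0 < γ) (hγ1 : γ ≤ 1)
    (ha : 0 ≤ a) (hδ : 0 ≤ δ) (hx : x ≤ 1) (h : 1 - x' ≤ exp a * (1 - x) + δ) :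
    1 - (1 - γ) * x' ≤ exp (a + δ / γ) * (1 - (1 - γ) * x) := by
  set u := 1 - (1 - γ) * x
  have hγu : γ ≤ u := by nlinarith
  have hexp : 1 ≤ exp a := one_le_exp ha
  have hδγ : 0 ≤ δ / γ := div_nonneg hδ hγ0.le
  calc 1 - (1 - γ) * x' = γ + (1 - γ) * (1 - x') := by ring
    _ ≤ γ + (1 - γ) * (exp a * (1 - x) + δ) := by gcongr
    _ ≤ exp a * u + δ := by nlinarith
    _ ≤ exp a * u + δ / γ * u := by
      gcongr
      calc δ = δ / γ * γ := (div_mul_cancel₀ δ hγ0.ne').symm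
        _ ≤ δ / γ * u := by gcongr
    _ ≤ exp a * (1 + δ / γ) * u := by
      nlinarith [mul_nonneg (mul_nonneg (sub_nonneg.2 hexp) hδγ) (hγ0.le.trans hγu)]
    _ ≤ exp a * exp (δ / γ) * u := by
      gcongr
      · linarith
      · linarith [add_one_le_exp (δ / γ)]
    _ = exp (a + δ / γ) * u := by rw [exp_add]

theorem negBinPGFDeriv_nonneg {η γ x : ℝ} (hγ0 : 0 < γ) (hγ1 : γ ≤ 1) (hx : (1 - γ) * x ≤ 1) :
    0 ≤ negBinPGFDeriv η γ x :=
  mul_nonneg (negBinPGFDerivCoeff_nonneg hγ0 hγ1) (rpow_nonneg (by linarith) _)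

theorem negBinPGFDeriv_le_of_le {η γ x y : ℝ} (hγ0 : 0 < γ) (hγ1 : γ ≤ 1) (hη : -1 ≤ η)
    (hxy : x ≤ y) (hy : (1 - γ) * y < 1) :
    negBinPGFDeriv η γ x ≤ negBinPGFDeriv η γ y := by
  refine mul_le_mul_of_nonneg_left ?_ (negBinPGFDerivCoeff_nonneg hγ0 hγ1)
  exact rpow_le_rpow_of_nonpos (by linarith) (by nlinarith) (by linarith)

theorem negBinPGFDeriv_le_exp_mul {η γ a δ x x' : ℝ} (hγ0 : 0 < γ) (hγ1 : γ ≤ 1)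
    (hη : -1 ≤ η) (ha : 0 ≤ a) (hδ : 0 ≤ δ) (hx : x ≤ 1) (hx' : (1 - γ) * x' < 1)
    (h : 1 - x' ≤ exp a * (1 - x) + δ) :
    negBinPGFDeriv η γ x ≤ exp ((η + 1) * (a + δ / γ)) * negBinPGFDeriv η γ x' := by
  have hu : 0 ≤ 1 - (1 - γ) * x := by nlinarith
  have key : (exp (a + δ / γ) * (1 - (1 - γ) * x)) ^ (-(η + 1))
      ≤ (1 - (1 - γ) * x') ^ (-(η + 1)) :=
    rpow_le_rpow_of_nonpos (by linarith)
      (one_sub_mul_le_exp_mul_one_sub_mul hγ0 hγ1 ha hδ hx h) (by linarith)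
  rw [mul_rpow (exp_pos _).le hu, ← exp_mul] at key
  unfold negBinPGFDeriv
  rw [mul_left_comm]
  refine mul_le_mul_of_nonneg_left ?_ (negBinPGFDerivCoeff_nonneg hγ0 hγ1)
  calc (1 - (1 - γ) * x) ^ (-(η + 1))
      = exp ((η + 1) * (a + δ / γ)) *
          (exp ((a + δ / γ) * -(η + 1)) * (1 - (1 - γ) * x) ^ (-(η + 1))) := by
        rw [← mul_assoc, ← exp_add, show (η + 1) * (a + δ / γ) + (a + δ / γ) * -(η + 1) = 0 by ring,
          exp_zero, one_mul]
    _ ≤ _ := by gcongr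

theorem sub_le_sub_of_hasDerivAt_le {f g f' g' : ℝ → ℝ} {a b : ℝ} (hab : a ≤ b)
    (hf : ∀ x ∈ Set.Icc a b, HasDerivAt f (f' x) x)
    (hg : ∀ x ∈ Set.Icc a b, HasDerivAt g (g' x) x)
    (hfg : ∀ x ∈ Set.Icc a b, f' x ≤ g' x) :
    f b - f a ≤ g b - g a := by
  have key := image_le_of_deriv_right_le_deriv_boundary (a := a) (b := b) (f := f)
    (B := fun x ↦ f a + (g x - g a))
    (fun x hx ↦ (hf x hx).continuousAt.continuousWithinAt)
    (fun x hx ↦ (hf x (Set.Ico_subset_Icc_self hx)).hasDerivWithinAt) (by simp)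
    (fun x hx ↦
      ((hg x hx).continuousAt.continuousWithinAt.sub continuousWithinAt_const).const_add _)
    (fun x hx ↦
      (((hg x (Set.Ico_subset_Icc_self hx)).sub_const (g a)).const_add (f a)).hasDerivWithinAt)
    (fun x hx ↦ hfg x (Set.Ico_subset_Icc_self hx)) (Set.right_mem_Icc.2 hab)
  linarith

theorem mul_negBinPGFDeriv_le {η γ a δ q q' x x' : ℝ} (hγ0 : 0 < γ) (hγ1 : γ ≤ 1)
    (hη : -1 ≤ η) (ha : 0 ≤ a) (hδ : 0 ≤ δ) (hq' : 0 ≤ q') (hx : x ≤ 1) (hx' : x' ≤ 1)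
    (h : 1 - x' ≤ exp a * (1 - x) + δ) :
    q * negBinPGFDeriv η γ x ≤ exp ((η + 2) * a + (η + 1) * δ / γ) * (q' * negBinPGFDeriv η γ x')
      + max (q - exp a * q') 0 * negBinPGFDeriv η γ 1 := by
  have hx0 : 0 ≤ negBinPGFDeriv η γ x := negBinPGFDeriv_nonneg hγ0 hγ1 (by nlinarith)
  have hxx' := negBinPGFDeriv_le_exp_mul hγ0 hγ1 hη ha hδ hx (by nlinarith) h
  have hx1 := negBinPGFDeriv_le_of_le hγ0 hγ1 hη hx (by linarith)
  have hexp : exp ((η + 2) * a + (η + 1) * δ / γ) = exp a * exp ((η + 1) * (a + δ / γ)) := by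
    rw [← exp_add]; ring_nf
  calc q * negBinPGFDeriv η γ x
      ≤ (exp a * q' + max (q - exp a * q') 0) * negBinPGFDeriv η γ x := by
        gcongr; linarith [le_max_left (q - exp a * q') 0]
    _ = exp a * q' * negBinPGFDeriv η γ x + max (q - exp a * q') 0 * negBinPGFDeriv η γ x := by
        ring
    _ ≤ exp a * q' * (exp ((η + 1) * (a + δ / γ)) * negBinPGFDeriv η γ x')
          + max (q - exp a * q') 0 * negBinPGFDeriv η γ 1 := by gcongr
    _ = _ := by rw [hexp]; ring

theorem negBinPGF_sub_le {η γ a δ G q G' q' : ℝ} (hγ0 : 0 < γ) (hγ1 : γ ≤ 1)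
    (hη : -1 ≤ η) (ha : 0 ≤ a) (hδ : 0 ≤ δ) (hq' : 0 ≤ q')
    (hG : G ≤ 1) (hGq : G + q ≤ 1) (hG' : G' ≤ 1) (hGq' : G' + q' ≤ 1)
    (htail : ∀ t ∈ Set.Icc (0 : ℝ) 1, 1 - (G' + t * q') ≤ exp a * (1 - (G + t * q)) + δ) :
    negBinPGF η γ (G + q) - negBinPGF η γ G
      ≤ exp ((η + 2) * a + (η + 1) * δ / γ) * (negBinPGF η γ (G' + q') - negBinPGF η γ G')
        + max (q - exp a * q') 0 * negBinPGFDeriv η γ 1 := by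
  have hline {G q : ℝ} (hG : G ≤ 1) (hGq : G + q ≤ 1) {t : ℝ} (ht : t ∈ Set.Icc (0 : ℝ) 1) :
      G + t * q ≤ 1 := by
    nlinarith [ht.1, ht.2]
  have hderiv {G q : ℝ} (hG : G ≤ 1) (hGq : G + q ≤ 1) {t : ℝ} (ht : t ∈ Set.Icc (0 : ℝ) 1) :
      HasDerivAt (fun s ↦ negBinPGF η γ (G + s * q)) (q * negBinPGFDeriv η γ (G + t * q)) t := by
    have hin : HasDerivAt (fun s ↦ G + s * q) q t := by
      simpa using ((hasDerivAt_id t).mul_const q).const_add G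
    exact ((hasDerivAt_negBinPGF η γ (by nlinarith [hline hG hGq ht])).comp t hin).congr_deriv
      (mul_comm _ _)
  have key := sub_le_sub_of_hasDerivAt_le zero_le_one (fun t ht ↦ hderiv hG hGq ht)
    (fun t ht ↦ ((hderiv hG' hGq' ht).const_mul (exp ((η + 2) * a + (η + 1) * δ / γ))).add
      ((hasDerivAt_id t).const_mul (max (q - exp a * q') 0 * negBinPGFDeriv η γ 1)))
    (fun t ht ↦ by
      simpa using mul_negBinPGFDeriv_le hγ0 hγ1 hη ha hδ hq' (hline hG hGq ht)
        (hline hG' hGq' ht) (htail t ht))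
  simp only [Pi.add_apply, id_eq, one_mul, zero_mul, mul_one, mul_zero, add_zero] at key
  linarith

theorem sum_mul_le_mul_sum_mul_add_sum_max {ι : Type*} (s : Finset ι) {P P' w : ι → ℝ} (c : ℝ)
    (hw0 : ∀ i ∈ s, 0 ≤ w i) (hw1 : ∀ i ∈ s, w i ≤ 1) :
    ∑ i ∈ s, w i * P i ≤ c * ∑ i ∈ s, w i * P' i + ∑ i ∈ s, max (P i - c * P' i) 0 := by
  rw [mul_sum, ← sub_le_iff_le_add', ← sum_sub_distrib]
  refine sum_le_sum fun i hi ↦ ?_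
  calc w i * P i - c * (w i * P' i) = w i * (P i - c * P' i) := by ring
    _ ≤ w i * max (P i - c * P' i) 0 := by gcongr; exacts [hw0 i hi, le_max_left _ _]
    _ ≤ max (P i - c * P' i) 0 := mul_le_of_le_one_left (le_max_right _ _) (hw1 i hi)

section CumulativeMass

variable {Y : Type*} [Fintype Y] [LinearOrder Y]

theorem cumLE_eq_cumLT_add (Q : Y → ℝ) (y : Y) : cumLE Q y = cumLT Q y + Q y := by
  rw [cumLE, cumLT, ← sum_filter_add_sum_filter_not (univ.filter (· ≤ y)) (· < y)]
  congr 1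
  · congr 1; ext z; simpa using le_of_lt
  · rw [sum_eq_single_of_mem y (by simp) (fun z hz hzy ↦ ?_)]
    simp only [mem_filter, mem_univ, true_and, not_lt] at hz
    exact absurd (le_antisymm hz.1 hz.2) hzy

theorem cumLE_mem_Icc {Q : Y → ℝ} (hQ : ∀ y, 0 ≤ Q y) (hsum : ∑ y, Q y = 1) (y : Y) :
    cumLE Q y ∈ Set.Icc 0 1 :=
  ⟨sum_nonneg fun z _ ↦ hQ z, hsum ▸ sum_le_sum_of_subset_of_nonneg (filter_subset _ _)
    fun z _ _ ↦ hQ z⟩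

theorem cumLT_mem_Icc {Q : Y → ℝ} (hQ : ∀ y, 0 ≤ Q y) (hsum : ∑ y, Q y = 1) (y : Y) :
    cumLT Q y ∈ Set.Icc 0 1 :=
  ⟨sum_nonneg fun z _ ↦ hQ z,
    by linarith [(cumLE_mem_Icc hQ hsum y).2, cumLE_eq_cumLT_add Q y, hQ y]⟩

theorem cumLT_add_mul_eq_sum (Q : Y → ℝ) (y : Y) (t : ℝ) :
    cumLT Q y + t * Q y = ∑ z, (if z < y then 1 else if z = y then t else 0) * Q z := by
  have h (z : Y) : (if z < y then 1 else if z = y then t else 0) * Q z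
      = (if z < y then Q z else 0) + (if z = y then t * Q z else 0) := by
    split_ifs with h₁ h₂ <;> simp_all
  simp [sum_add_distrib, h, cumLT, sum_filter]

theorem one_sub_cumLT_add_mul_le {Q Q' : Y → ℝ} (hQsum : ∑ y, Q y = 1)
    (hQ'sum : ∑ y, Q' y = 1) {c δ : ℝ} (hDP : ∑ y, max (Q' y - c * Q y) 0 ≤ δ) (y : Y)
    {t : ℝ} (ht : t ∈ Set.Icc (0 : ℝ) 1) :
    1 - (cumLT Q' y + t * Q' y) ≤ c * (1 - (cumLT Q y + t * Q y)) + δ := by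
  set v : Y → ℝ := fun z ↦ if z < y then 1 else if z = y then t else 0
  have hv0 (z : Y) : 0 ≤ v z := by unfold v; split_ifs <;> linarith [ht.1]
  have hv1 (z : Y) : v z ≤ 1 := by unfold v; split_ifs <;> linarith [ht.2]
  have hcompl {P : Y → ℝ} (hP : ∑ y, P y = 1) :
      1 - (cumLT P y + t * P y) = ∑ z, (1 - v z) * P z := by
    simp only [cumLT_add_mul_eq_sum, sub_mul, one_mul, sum_sub_distrib, hP, v]
  rw [hcompl hQsum, hcompl hQ'sum]
  exact (sum_mul_le_mul_sum_mul_add_sum_max univ c (fun z _ ↦ by linarith [hv1 z])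
    (fun z _ ↦ by linarith [hv0 z])).trans (by gcongr)

end CumulativeMass

theorem negBinPGF_cumLE_sub_cumLT_le {Y : Type*} [Fintype Y] [LinearOrder Y] {η γ a δ : ℝ}
    (hγ0 : 0 < γ) (hγ1 : γ ≤ 1) (hη : -1 ≤ η) (ha : 0 ≤ a) (hδ : 0 ≤ δ) {Q Q' : Y → ℝ}
    (hQ : ∀ y, 0 ≤ Q y) (hQ' : ∀ y, 0 ≤ Q' y) (hQsum : ∑ y, Q y = 1) (hQ'sum : ∑ y, Q' y = 1)
    (hDP : ∑ y, max (Q' y - exp a * Q y) 0 ≤ δ) (y : Y) :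
    negBinPGF η γ (cumLE Q y) - negBinPGF η γ (cumLT Q y)
      ≤ exp ((η + 2) * a + (η + 1) * δ / γ)
          * (negBinPGF η γ (cumLE Q' y) - negBinPGF η γ (cumLT Q' y))
        + max (Q y - exp a * Q' y) 0 * negBinPGFDeriv η γ 1 := by
  have hLE := (cumLE_mem_Icc hQ hQsum y).2
  have hLE' := (cumLE_mem_Icc hQ' hQ'sum y).2
  simp only [cumLE_eq_cumLT_add] at hLE hLE' ⊢
  exact negBinPGF_sub_le hγ0 hγ1 hη ha hδ (hQ' y) (cumLT_mem_Icc hQ hQsum y).2 hLE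
    (cumLT_mem_Icc hQ' hQ'sum y).2 hLE'
    (fun t ht ↦ one_sub_cumLT_add_mul_le hQsum hQ'sum hDP y ht)

theorem private_selection_negbin_approx_dp_general
    {Y : Type*} [Fintype Y] [LinearOrder Y]
    (Q Q' : Y → ℝ)
    (hQ_pos : ∀ y, 0 < Q y) (hQ_sum : ∑ y, Q y = 1)
    (hQ'_pos : ∀ y, 0 < Q' y) (hQ'_sum : ∑ y, Q' y = 1)
    (γ η : ℝ) (hγ : γ ∈ Set.Ioo (0 : ℝ) 1) (hη : -1 < η)
    (m : ℝ) (hm : m = negBinMean η γ)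
    (A A' : Y → ℝ)
    (hA : ∀ y, A y = pgf (negBinPMF η γ) (cumLE Q y) - pgf (negBinPMF η γ) (cumLT Q y))
    (hA' : ∀ y, A' y = pgf (negBinPMF η γ) (cumLE Q' y) - pgf (negBinPMF η γ) (cumLT Q' y))
    (ε₀ δ₀ : ℝ) (hε₀ : 0 ≤ ε₀) (hδ₀ : 0 ≤ δ₀)
    (hQDP : ∑ y, max (Q y - Real.exp ε₀ * Q' y) 0 ≤ δ₀)
    (hQDP' : ∑ y, max (Q' y - Real.exp ε₀ * Q y) 0 ≤ δ₀)
    (ε : ℝ) (hε : ε = (η + 2) * ε₀ + (η + 1) * δ₀ / γ) :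
    ∑ y, max (A y - Real.exp ε * A' y) 0 ≤ m * δ₀ := by
  obtain ⟨hγ0, hγ1⟩ := hγ
  have hQ (y : Y) : 0 ≤ Q y := (hQ_pos y).le
  have hQ' (y : Y) : 0 ≤ Q' y := (hQ'_pos y).le
  rw [negBinMean_eq_negBinPGFDeriv_one hγ0] at hm
  have hm0 : 0 ≤ m := hm ▸ negBinPGFDeriv_nonneg hγ0 hγ1.le (by linarith)
  have hpgf {x : ℝ} (hx : x ∈ Set.Icc (0 : ℝ) 1) : pgf (negBinPMF η γ) x = negBinPGF η γ x :=
    pgf_negBinPMF (abs_lt.2 ⟨by nlinarith [hx.1], by nlinarith [hx.2]⟩)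
  have hA_le (y : Y) : A y - exp ε * A' y ≤ max (Q y - exp ε₀ * Q' y) 0 * m := by
    rw [hA, hA', hpgf (cumLE_mem_Icc hQ hQ_sum y), hpgf (cumLT_mem_Icc hQ hQ_sum y),
      hpgf (cumLE_mem_Icc hQ' hQ'_sum y), hpgf (cumLT_mem_Icc hQ' hQ'_sum y), hε, hm]
    linarith [negBinPGF_cumLE_sub_cumLT_le hγ0 hγ1.le hη.le hε₀ hδ₀ hQ hQ' hQ_sum hQ'_sum hQDP' y]
  calc ∑ y, max (A y - exp ε * A' y) 0 ≤ ∑ y, max (Q y - exp ε₀ * Q' y) 0 * m :=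
        sum_le_sum fun y _ ↦ max_le (hA_le y) (by positivity)
    _ = (∑ y, max (Q y - exp ε₀ * Q' y) 0) * m := (sum_mul _ _ _).symm
    _ ≤ δ₀ * m := by gcongr
    _ = m * δ₀ := mul_comm _ _

/-- Corollary 5.4: approximate DP guarantee for private selection with a truncated
negative binomial number of candidates. -/
theorem private_selection_negbin_approx_dp
    {Y : Type*} [Fintype Y] [LinearOrder Y]
    (Q Q' : Y → ℝ)
    (hQ_pos : ∀ y, 0 < Q y) (hQ_le : ∀ y, Q y ≤ 1) (hQ_sum : ∑ y, Q y = 1)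
    (hQ'_pos : ∀ y, 0 < Q' y) (hQ'_le : ∀ y, Q' y ≤ 1) (hQ'_sum : ∑ y, Q' y = 1)
    (γ η : ℝ) (hγ : γ ∈ Set.Ioo (0 : ℝ) 1) (hη : -1 < η)
    (m : ℝ) (hm : m = negBinMean η γ)
    (A A' : Y → ℝ)
    (hA : ∀ y, A y = pgf (negBinPMF η γ) (cumLE Q y) - pgf (negBinPMF η γ) (cumLT Q y))
    (hA' : ∀ y, A' y = pgf (negBinPMF η γ) (cumLE Q' y) - pgf (negBinPMF η γ) (cumLT Q' y))
    (ε₀ δ₀ : ℝ) (hε₀ : 0 ≤ ε₀) (hδ₀ : 0 ≤ δ₀)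
    (hQDP : ∑ y, max (Q y - Real.exp ε₀ * Q' y) 0 ≤ δ₀)
    (hQDP' : ∑ y, max (Q' y - Real.exp ε₀ * Q y) 0 ≤ δ₀)
    (ε : ℝ) (hε : ε = (η + 2) * ε₀ + (η + 1) * δ₀ / γ) :
    ∑ y, max (A y - Real.exp ε * A' y) 0 ≤ m * δ₀ :=
  private_selection_negbin_approx_dp_general Q Q' hQ_pos hQ_sum hQ'_pos hQ'_sum γ η hγ hη m hm A A'
    hA hA' ε₀ δ₀ hε₀ hδ₀ hQDP hQDP' ε hε
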